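/- Gessel's fundamental quasisymmetric polynomial F_{(2,2)} is not SNP: in four variables, (0,1,2,1) = ½(0,2,2,0) + ½(0,0,2,2) lies in Newton(F_{(2,2)}(x1,x2,x3,x4)) but x2 x3^2 x4 has coefficient zero in F_{(2,2)}(x1,x2,x3,x4). -/
import Mathlib


open MvPolynomial Finset
open scoped Classical

/-- The Newton polytope of a multivariate polynomial. -/
noncomputable def Newton {n : ℕ} {R : Type*} [CommSemiring R]
    (f : MvPolynomial (Fin n) R) : Set (Fin n → ℝ) :=
  convexHull ℝ ((fun d : Fin n →₀ ℕ => fun i => (d i : ℝ)) '' ↑f.support)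

/-- `f` has saturated Newton polytope. -/
def SNP {n : ℕ} {R : Type*} [CommSemiring R] (f : MvPolynomial (Fin n) R) : Prop :=
  ∀ α : Fin n →₀ ℕ, (fun i => (α i : ℝ)) ∈ Newton f → coeff α f ≠ 0

/-- The monomial quasisymmetric polynomial `M_α` in `n` variables:
`M_α = Σ_{i1<...<ik} x_{i1}^{α1} ⋯ x_{ik}^{αk}`. -/
noncomputable def Mq {n k : ℕ} (α : Fin k → ℕ) : MvPolynomial (Fin n) ℝ :=
  ∑ ι ∈ Finset.univ.filter (fun ι : Fin k → Fin n => StrictMono ι),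
    monomial (Finsupp.equivFunOnFinite.symm
      (fun j => ∑ i ∈ Finset.univ.filter (fun i => ι i = j), α i)) 1

/-- A decidable count of the strictly increasing maps contributing exponent `b` to `M_α`. -/
def goodCount (n k : ℕ) (α : Fin k → ℕ) (b : Fin n → ℕ) : ℕ :=
  (Finset.univ.filter (fun ι : Fin k → Fin n =>
    (∀ a c : Fin k, a < c → ι a < ι c) ∧
      ∀ j, (∑ i ∈ Finset.univ.filter (fun i => ι i = j), α i) = b j)).card

lemma coeff_Mq {n k : ℕ} (α : Fin k → ℕ) (b : Fin n → ℕ) :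
    coeff (Finsupp.equivFunOnFinite.symm b) (Mq (n := n) α) = goodCount n k α b := by
  unfold Mq goodCount
  rw [MvPolynomial.coeff_sum]
  simp only [coeff_monomial, EmbeddingLike.apply_eq_iff_eq]
  rw [Finset.sum_boole, Finset.filter_filter]
  norm_cast
  congr 1
  apply Finset.filter_congr
  intro ι _
  constructor
  · rintro ⟨h1, h2⟩
    exact ⟨fun a c hac => h1 hac, fun j => congrFun h2 j⟩
  · rintro ⟨h1, h2⟩
    exact ⟨fun a c hac => h1 a c hac, funext h2⟩

lemma coeff_F (F : MvPolynomial (Fin 4) ℝ)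
    (hF : F = Mq ![2, 2] + Mq ![2, 1, 1] + Mq ![1, 1, 2] + Mq ![1, 1, 1, 1])
    (b : Fin 4 → ℕ) :
    coeff (Finsupp.equivFunOnFinite.symm b) F =
      (goodCount 4 2 ![2,2] b + goodCount 4 3 ![2,1,1] b
        + goodCount 4 3 ![1,1,2] b + goodCount 4 4 ![1,1,1,1] b : ℕ) := by
  subst hF
  simp only [coeff_add, coeff_Mq]
  push_cast
  ring

/-- `F_{(2,2)} = M_{(2,2)} + M_{(2,1,1)} + M_{(1,1,2)} + M_{(1,1,1,1)}` in four
variables is not SNP: `(0,1,2,1)` lies in its Newton polytope but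
`x2 x3^2 x4` has zero coefficient. -/
theorem stmt15 (F : MvPolynomial (Fin 4) ℝ)
    (hF : F = Mq ![2, 2] + Mq ![2, 1, 1] + Mq ![1, 1, 2] + Mq ![1, 1, 1, 1]) :
    ((fun i : Fin 4 => ((![0, 1, 2, 1] i : ℕ) : ℝ)) ∈ Newton F) ∧
      coeff (Finsupp.equivFunOnFinite.symm ![0, 1, 2, 1]) F = 0 ∧ ¬ SNP F := by
  have h0 : coeff (Finsupp.equivFunOnFinite.symm ![0, 1, 2, 1]) F = 0 := by
    rw [coeff_F F hF]
    norm_cast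
  have h1 : coeff (Finsupp.equivFunOnFinite.symm ![0, 2, 2, 0]) F = 1 := by
    rw [coeff_F F hF]
    norm_cast
  have h2 : coeff (Finsupp.equivFunOnFinite.symm ![0, 0, 2, 2]) F = 1 := by
    rw [coeff_F F hF]
    norm_cast
  have hmem : (fun i : Fin 4 => ((![0, 1, 2, 1] i : ℕ) : ℝ)) ∈ Newton F := by
    have hs1 : (fun i : Fin 4 => ((![0, 2, 2, 0] i : ℕ) : ℝ)) ∈
        ((fun d : Fin 4 →₀ ℕ => fun i => (d i : ℝ)) '' ↑F.support) := by
      refine ⟨Finsupp.equivFunOnFinite.symm ![0, 2, 2, 0], ?_, ?_⟩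
      · simp [MvPolynomial.mem_support_iff, h1]
      · funext i; simp
    have hs2 : (fun i : Fin 4 => ((![0, 0, 2, 2] i : ℕ) : ℝ)) ∈
        ((fun d : Fin 4 →₀ ℕ => fun i => (d i : ℝ)) '' ↑F.support) := by
      refine ⟨Finsupp.equivFunOnFinite.symm ![0, 0, 2, 2], ?_, ?_⟩
      · simp [MvPolynomial.mem_support_iff, h2]
      · funext i; simp
    have hcomb := (convex_convexHull ℝ _)
      (subset_convexHull ℝ _ hs1) (subset_convexHull ℝ _ hs2)
      (by norm_num : (0:ℝ) ≤ 1/2) (by norm_num : (0:ℝ) ≤ 1/2) (by norm_num)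
    have heq : (fun i : Fin 4 => ((![0, 1, 2, 1] i : ℕ) : ℝ)) =
        (1/2 : ℝ) • (fun i : Fin 4 => ((![0, 2, 2, 0] i : ℕ) : ℝ))
          + (1/2 : ℝ) • (fun i : Fin 4 => ((![0, 0, 2, 2] i : ℕ) : ℝ)) := by
      funext i
      fin_cases i <;> norm_num
    rw [Newton, heq]
    exact hcomb
  refine ⟨hmem, h0, ?_⟩
  intro hSNP
  apply hSNP (Finsupp.equivFunOnFinite.symm ![0, 1, 2, 1]) _ h0
  have : (fun i : Fin 4 => ((Finsupp.equivFunOnFinite.symm ![0, 1, 2, 1] : Fin 4 →₀ ℕ) i : ℝ))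
      = (fun i : Fin 4 => ((![0, 1, 2, 1] i : ℕ) : ℝ)) := by
    funext i; simp
  rw [this]
  exact hmem
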